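/- Suppose the family ⟨a^α_β : β < γ_α⟩ (for α a countable limit ordinal) witnesses C_s. Let A, B ⊆ ω₁ be disjoint sets such that E := A ∪ B is stationary and such that for every countable limit ordinal α ∈ E the following hold: if some β < γ_α satisfies that a^α_β ∩ A is infinite and a^α_β ∩ B is finite, then α ∈ B; and if some β < γ_α satisfies that a^α_β ∩ B is infinite and a^α_β ∩ A is finite, then α ∈ A. Then A and B are both stationary. -/

import Mathlib

noncomputable section

/-- The first uncountable ordinal. -/
def omega1 : Ordinal := (Cardinal.aleph 1).ord

/-- `C ⊆ ω₁` is club: unbounded in `ω₁` and closed (every limit `α < ω₁` with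
`sup (C ∩ α) = α` belongs to `C`). -/
def IsClub' (C : Set Ordinal) : Prop :=
  C ⊆ Set.Iio omega1 ∧
  (∀ α < omega1, ∃ β ∈ C, α < β) ∧
  (∀ α < omega1, Order.IsSuccLimit α → sSup (C ∩ Set.Iio α) = α → α ∈ C)

/-- `S ⊆ ω₁` is stationary: it meets every club subset of `ω₁`. -/
def IsStat (S : Set Ordinal) : Prop :=
  S ⊆ Set.Iio omega1 ∧ ∀ C, IsClub' C → (S ∩ C).Nonempty

/-- A run of the stationary set splitting game `SG`, coded by a pair of
disjoint subsets `A, B` of `ω₁` (the accepted set is `E = A ∪ B`). -/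
def SGRun (A B : Set Ordinal) : Prop :=
  A ⊆ Set.Iio omega1 ∧ B ⊆ Set.Iio omega1 ∧ Disjoint A B

/-- Split wins the run `(A, B)` if `A ∪ B` is nonstationary or both `A` and `B`
are stationary. -/
def SplitWins (A B : Set Ordinal) : Prop :=
  ¬ IsStat (A ∪ B) ∨ (IsStat A ∧ IsStat B)

/-- The run `(A, B)` is played according to Split's strategy `τ`
(`true` = put into `A`): for every accepted `α`, `α ∈ A` iff `τ` says so on the
position `(A ∩ α, B ∩ α)`. -/
def PlayedBySplit (τ : Ordinal → Set Ordinal → Set Ordinal → Bool)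
    (A B : Set Ordinal) : Prop :=
  ∀ α ∈ A ∪ B, (α ∈ A ↔ τ α (A ∩ Set.Iio α) (B ∩ Set.Iio α) = true)

/-- `τ` is a winning strategy for Split. -/
def SplitWinning (τ : Ordinal → Set Ordinal → Set Ordinal → Bool) : Prop :=
  ∀ A B, SGRun A B → PlayedBySplit τ A B → SplitWins A B

/-- The run `(A, B)` is played according to Unsplit's strategy `υ`
(`true` = accept): for every `α < ω₁`, `α` is accepted iff `υ` says so on the
position `(A ∩ α, B ∩ α)`. -/
def PlayedByUnsplit (υ : Ordinal → Set Ordinal → Set Ordinal → Bool)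
    (A B : Set Ordinal) : Prop :=
  ∀ α < omega1, (α ∈ A ∪ B ↔ υ α (A ∩ Set.Iio α) (B ∩ Set.Iio α) = true)

/-- `υ` is a winning strategy for Unsplit. -/
def UnsplitWinning (υ : Ordinal → Set Ordinal → Set Ordinal → Bool) : Prop :=
  ∀ A B, SGRun A B → PlayedByUnsplit υ A B → ¬ SplitWins A B

/-- A set of ordinals has order type `ω`. -/
def OTypeOmega (s : Set Ordinal) : Prop :=
  Ordinal.type ((· < ·) : s → s → Prop) = Ordinal.omega0

/-- The family `⟨a α β : β < γ α⟩` (for `α < ω₁` limit) witnesses `C_s`: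
each `a α β` is a cofinal subset of `α` of order type `ω`; the family is
`⊆`-decreasing mod finite in `β`; and for every club `C` and stationary `E`
some `a α β` with `α ∈ E` has `a α β \ C` finite and `a α β ∩ E` infinite. -/
def CsWitness (γ : Ordinal → Ordinal) (a : Ordinal → Ordinal → Set Ordinal) : Prop :=
  (∀ α, α < omega1 → Order.IsSuccLimit α →
    γ α < omega1 ∧
    ∀ β < γ α, a α β ⊆ Set.Iio α ∧ (∀ ξ < α, ∃ η ∈ a α β, ξ < η) ∧ OTypeOmega (a α β)) ∧
  (∀ α, α < omega1 → Order.IsSuccLimit α → ∀ β β', β < β' → β' < γ α → (a α β' \ a α β).Finite) ∧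
  (∀ C E : Set Ordinal, IsClub' C → IsStat E →
    ∃ α β, α < omega1 ∧ Order.IsSuccLimit α ∧ α ∈ E ∧ β < γ α ∧
      (a α β \ C).Finite ∧ (a α β ∩ E).Infinite)

/-- The principle `C_s`. -/
def Cs : Prop :=
  ∃ (γ : Ordinal.{0} → Ordinal.{0}) (a : Ordinal.{0} → Ordinal.{0} → Set Ordinal.{0}), CsWitness γ a

/-- The sequence `⟨σ α : α < ω₁⟩` witnesses `D_u`: it is a `◊`-sequence, and
for every `E ⊆ ω₁` there is a club `C` such that either every `α ∈ C` guessing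
`E` lies in `E`, or every `α ∈ C` guessing `E` lies outside `E`. -/
def DuWitness (σ : Ordinal → Set Ordinal) : Prop :=
  (∀ α < omega1, σ α ⊆ Set.Iio α) ∧
  (∀ A : Set Ordinal, A ⊆ Set.Iio omega1 →
    IsStat {α | α < omega1 ∧ A ∩ Set.Iio α = σ α}) ∧
  (∀ E : Set Ordinal, E ⊆ Set.Iio omega1 →
    ∃ C, IsClub' C ∧
      ((∀ α ∈ C, E ∩ Set.Iio α = σ α → α ∈ E) ∨
       (∀ α ∈ C, E ∩ Set.Iio α = σ α → α ∉ E)))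

/-- The principle `D_u`. -/
def Du : Prop := ∃ σ : Ordinal.{0} → Set Ordinal.{0}, DuWitness σ

/-!
If `A` were nonstationary, say disjoint from a club `C`, apply `C_s` to the stationary set
`(A ∪ B) ∩ C`: it yields `α ∈ (A ∪ B) ∩ C` and a ladder `a α β` that is almost contained in `C`,
hence almost disjoint from `A`, while it meets `(A ∪ B) ∩ C ⊆ B` infinitely. The hypothesis on
such ladders then puts `α` into `A`, contradicting `A ∩ C = ∅`. The same argument with the roles
of `A` and `B` exchanged shows that `B` is stationary.

The only set-theoretic input is that clubs of `ω₁` are closed under finite intersections; it is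
obtained from Mathlib's `IsClub.inter` by reading `IsClub'` as `IsClub` on the well-order
`Iio omega1`.
-/

open Set Order Cardinal

theorem cof_Iio_omega1_ne_aleph0 : Order.cof (Iio omega1) ≠ ℵ₀ := by
  rw [Ordinal.cof_Iio, ← Ordinal.lift_cof, omega1, isRegular_aleph_one.cof_ord]
  simpa using aleph0_lt_aleph_one.ne'

theorem isLUB_image_val_Iio_iff {o : Ordinal} {d : Set (Iio o)} {a : Iio o} :
    IsLUB (Subtype.val '' d) a.val ↔ IsLUB d a := by
  refine ⟨fun h ↦ ⟨fun x hx ↦ h.1 (mem_image_of_mem _ hx), fun b hb ↦ ?_⟩,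
    fun h ↦ ⟨?_, fun b hb ↦ ?_⟩⟩
  · exact h.2 (forall_mem_image.2 fun x hx ↦ hb hx)
  · exact forall_mem_image.2 fun x hx ↦ h.1 hx
  · by_cases hbo : b < o
    · exact h.2 (show (⟨b, hbo⟩ : Iio o) ∈ upperBounds d from
        fun x hx ↦ hb (mem_image_of_mem _ hx))
    · exact a.2.le.trans (not_lt.1 hbo)

theorem IsClub'.isClub_preimage {C : Set Ordinal} (hC : IsClub' C) :
    IsClub (Subtype.val ⁻¹' C : Set (Iio omega1)) := by
  obtain ⟨hCω, hunb, hclosed⟩ := hC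
  refine ⟨fun d hdC hd _ a ha ↦ ?_, fun x ↦ ?_⟩
  · by_cases had : a ∈ d
    · exact hdC had
    have hd_lt : ∀ x ∈ d, x.val ∈ C ∩ Iio a.val := fun x hx ↦
      ⟨hdC hx, (ha.1 hx).lt_of_ne fun h ↦ had (h ▸ hx)⟩
    have ha' := isLUB_image_val_Iio_iff.2 ha
    have hlim : IsSuccLimit a.val := ha'.isSuccLimit_of_notMem (hd.image _) <| by
      rintro ⟨x, hx, hxa⟩
      exact had (Subtype.ext hxa ▸ hx)
    refine hclosed a a.2 hlim (IsLUB.csSup_eq ?_ ?_)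
    · exact ha'.of_subset_of_superset hlim.isLUB_Iio (image_subset_iff.2 hd_lt) inter_subset_right
    · exact (hd.image _).mono (image_subset_iff.2 hd_lt)
  · obtain ⟨y, hyC, hxy⟩ := hunb x x.2
    exact ⟨⟨y, hCω hyC⟩, hyC, hxy.le⟩

theorem isClub'_of_isClub_preimage {C : Set Ordinal} (hCω : C ⊆ Iio omega1)
    (hC : IsClub (Subtype.val ⁻¹' C : Set (Iio omega1))) : IsClub' C := by
  refine ⟨hCω, fun α hα ↦ ?_, fun α hα hlim hsup ↦ ?_⟩
  · have hsucc : succ α < omega1 := (isSuccLimit_ord (aleph0_le_aleph 1)).succ_lt hα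
    obtain ⟨y, hyC, hαy⟩ := hC.isCofinal ⟨succ α, hsucc⟩
    exact ⟨y, hyC, succ_le_iff.1 hαy⟩
  · have hne : (C ∩ Iio α).Nonempty := by
      by_contra! h
      rw [h, csSup_empty] at hsup
      exact hlim.ne_bot hsup.symm
    have hlub : IsLUB (C ∩ Iio α) α := by
      simpa only [hsup] using isLUB_csSup hne ⟨α, fun x hx ↦ hx.2.le⟩
    refine hC.isLUB_mem (t := (Subtype.val ⁻¹' (C ∩ Iio α) : Set (Iio omega1)))
      (x := ⟨α, hα⟩) (fun x hx ↦ hx.1) ?_ ?_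
    · obtain ⟨x, hx⟩ := hne
      exact ⟨⟨x, hx.2.trans hα⟩, hx⟩
    · refine isLUB_image_val_Iio_iff.1 ?_
      rwa [image_preimage_eq_inter_range, Subtype.range_coe, inter_eq_left.2]
      exact fun x hx ↦ hx.2.trans hα

theorem IsClub'.inter {C D : Set Ordinal} (hC : IsClub' C) (hD : IsClub' D) : IsClub' (C ∩ D) :=
  isClub'_of_isClub_preimage (inter_subset_left.trans hC.1)
    (hC.isClub_preimage.inter cof_Iio_omega1_ne_aleph0 hD.isClub_preimage)

theorem IsStat.inter_isClub' {S C : Set Ordinal} (hS : IsStat S) (hC : IsClub' C) :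
    IsStat (S ∩ C) :=
  ⟨inter_subset_left.trans hS.1, fun D hD ↦ by simpa only [inter_assoc] using hS.2 _ (hC.inter hD)⟩

theorem CsWitness.isStat_of_isStat_union {γ : Ordinal → Ordinal}
    {a : Ordinal → Ordinal → Set Ordinal} (hw : CsWitness γ a) {A B : Set Ordinal}
    (hstat : IsStat (A ∪ B))
    (hA : ∀ α, α < omega1 → IsSuccLimit α → α ∈ A ∪ B →
      (∃ β < γ α, (a α β ∩ B).Infinite ∧ (a α β ∩ A).Finite) → α ∈ A) :
    IsStat A := by
  refine ⟨subset_union_left.trans hstat.1, fun C hC ↦ ?_⟩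
  by_contra! hAC
  have hCA : ∀ x ∈ C, x ∉ A := fun x hxC hxA ↦ eq_empty_iff_forall_notMem.1 hAC x ⟨hxA, hxC⟩
  obtain ⟨α, β, hα, hlim, ⟨hαE, hαC⟩, hβ, hfin, hinf⟩ := hw.2.2 C _ hC (hstat.inter_isClub' hC)
  have hAfin : (a α β ∩ A).Finite :=
    hfin.subset fun x hx ↦ ⟨hx.1, fun hxC ↦ hCA x hxC hx.2⟩
  have hBinf : (a α β ∩ B).Infinite :=
    hinf.mono fun x hx ↦ ⟨hx.1, hx.2.1.resolve_left (hCA x hx.2.2)⟩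
  exact hCA α hαC (hA α hα hlim hαE ⟨β, hβ, hBinf, hAfin⟩)

theorem cs_strategy_produces_stationary_pieces_general
    (γ : Ordinal → Ordinal) (a : Ordinal → Ordinal → Set Ordinal)
    (hw : CsWitness γ a)
    (A B : Set Ordinal) (hstat : IsStat (A ∪ B))
    (h1 : ∀ α, α < omega1 → Order.IsSuccLimit α → α ∈ A ∪ B →
      (∃ β < γ α, (a α β ∩ A).Infinite ∧ (a α β ∩ B).Finite) → α ∈ B)
    (h2 : ∀ α, α < omega1 → Order.IsSuccLimit α → α ∈ A ∪ B →
      (∃ β < γ α, (a α β ∩ B).Infinite ∧ (a α β ∩ A).Finite) → α ∈ A) :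
    IsStat A ∧ IsStat B :=
  ⟨hw.isStat_of_isStat_union hstat h2, hw.isStat_of_isStat_union (union_comm A B ▸ hstat)
    fun α hα hlim hαE ↦ h1 α hα hlim (union_comm B A ▸ hαE)⟩

/-- If `⟨a α β : β < γ α⟩` witnesses `C_s`, `A, B` are disjoint with `E = A ∪ B`
stationary, and for every countable limit `α ∈ E`: if some `a α β` meets `A`
infinitely and `B` finitely then `α ∈ B`, and if some `a α β` meets `B`
infinitely and `A` finitely then `α ∈ A`; then `A` and `B` are both stationary. -/
theorem cs_strategy_produces_stationary_pieces
    (γ : Ordinal → Ordinal) (a : Ordinal → Ordinal → Set Ordinal)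
    (hw : CsWitness γ a)
    (A B : Set Ordinal) (hA : A ⊆ Set.Iio omega1) (hB : B ⊆ Set.Iio omega1)
    (hdisj : Disjoint A B) (hstat : IsStat (A ∪ B))
    (h1 : ∀ α, α < omega1 → Order.IsSuccLimit α → α ∈ A ∪ B →
      (∃ β < γ α, (a α β ∩ A).Infinite ∧ (a α β ∩ B).Finite) → α ∈ B)
    (h2 : ∀ α, α < omega1 → Order.IsSuccLimit α → α ∈ A ∪ B →
      (∃ β < γ α, (a α β ∩ B).Infinite ∧ (a α β ∩ A).Finite) → α ∈ A) :
    IsStat A ∧ IsStat B :=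
  cs_strategy_produces_stationary_pieces_general γ a hw A B hstat h1 h2

end
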